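/- For the five-qubit trigonal bipyramid state |ψ₅⟩ = (|S_{5,1}⟩ + |S_{5,4}⟩)/√2, the maximal overlap with symmetric product states is max_σ |⟨ψ₅|σ^{⊗5}⟩|² = 5/16, so E_G(|ψ₅⟩) = log₂(16/5). -/

import Mathlib

/-!
All `C(n,k)` basis strings of weight `k` contribute the same product `σ̄₀^(n-k) σ̄₁^k`, so
`⟨σ^⊗n|S_{n,k}⟩ = √C(n,k) σ̄₀^(n-k) σ̄₁^k`, and the overlap with `ψ₅` is `√(5/2) (ā⁴ b̄ + ā b̄⁴)`
for `a = σ₀`, `b = σ₁`. By the triangle inequality its square is at most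
`(5/2) (|a|⁴|b| + |a||b|⁴)²`, which with `u = |a||b| ≤ 1/2` equals
`(5/2) u² (1 + 2u) (1 - u)² ≤ 5/16`; equality holds at `|a| = |b| = 1/√2`, e.g. for the
equatorial state `θ = π/2`, `φ = 0`.
-/

open Finset

noncomputable def overlap {n : ℕ} (f g : (Fin n → Fin 2) → ℂ) : ℂ :=
  ∑ x : Fin n → Fin 2, (starRingEnd ℂ) (f x) * g x

noncomputable def symmPow (n : ℕ) (σ : Fin 2 → ℂ) : (Fin n → Fin 2) → ℂ :=
  fun x => ∏ i, σ (x i)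

noncomputable def prodState {n : ℕ} (σ : Fin n → Fin 2 → ℂ) : (Fin n → Fin 2) → ℂ :=
  fun x => ∏ j, σ j (x j)

def qubitUnit (σ : Fin 2 → ℂ) : Prop :=
  ‖σ 0‖ ^ 2 + ‖σ 1‖ ^ 2 = 1

noncomputable def dicke (n k : ℕ) : (Fin n → Fin 2) → ℂ :=
  fun x => if (∑ i, ((x i : ℕ))) = k then ((1 / Real.sqrt (n.choose k) : ℝ) : ℂ) else 0

noncomputable def bloch (θ ph : ℝ) : Fin 2 → ℂ :=
  fun i => if i = 0 then ((Real.cos (θ/2) : ℝ) : ℂ)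
           else Complex.exp (Complex.I * ph) * ((Real.sin (θ/2) : ℝ) : ℂ)

def isCPP (n : ℕ) (ψ : (Fin n → Fin 2) → ℂ) (σ : Fin 2 → ℂ) : Prop :=
  qubitUnit σ ∧ ∀ τ, qubitUnit τ →
    ‖overlap (symmPow n τ) ψ‖ ≤ ‖overlap (symmPow n σ) ψ‖

noncomputable def trigonalBipyramidState : (Fin 5 → Fin 2) → ℂ :=
  fun x => ((1 / Real.sqrt 2 : ℝ) : ℂ) * (dicke 5 1 x + dicke 5 4 x)

theorem sum_val_eq_card_filter {ι : Type*} [Fintype ι] (x : ι → Fin 2) :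
    ∑ i, (x i : ℕ) = #{i | x i = 1} := by
  rw [card_filter]
  refine sum_congr rfl fun i _ => ?_
  generalize x i = a
  fin_cases a <;> rfl

theorem card_filter_sum_val_eq_choose (n k : ℕ) :
    #{x : Fin n → Fin 2 | ∑ i, (x i : ℕ) = k} = n.choose k := by
  rw [← card_fin n, ← card_powersetCard, card_fin]
  refine card_nbij' (fun x => ({i | x i = 1} : Finset _)) (fun t i => if i ∈ t then 1 else 0)
    ?_ ?_ ?_ ?_
  · intro x hx
    simp_all [sum_val_eq_card_filter]
  · intro t ht
    simp_all [sum_val_eq_card_filter]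
  · intro x _
    funext i
    rcases Fin.exists_fin_two.mp ⟨x i, rfl⟩ with h | h <;> simp [h]
  · intro t _
    ext i
    by_cases hi : i ∈ t <;> simp [hi]

theorem prod_comp_fin_two {M : Type*} [CommMonoid M] {n : ℕ} (c : Fin 2 → M)
    (x : Fin n → Fin 2) :
    ∏ i, c (x i) = c 0 ^ (n - ∑ i, (x i : ℕ)) * c 1 ^ ∑ i, (x i : ℕ) := by
  have hsplit : #{i | x i = 1} + #{i | ¬ x i = 1} = n := by
    rw [card_filter_add_card_filter_not, card_univ, Fintype.card_fin]
  rw [sum_val_eq_card_filter, show n - #{i | x i = 1} = #{i | ¬ x i = 1} by omega, mul_comm,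
    ← prod_const, ← prod_const, ← prod_filter_mul_prod_filter_not univ (fun i => x i = 1)]
  congr 1 <;> refine prod_congr rfl fun i hi => ?_
  · rw [(mem_filter.1 hi).2]
  · have hne : x i ≠ 1 := (mem_filter.1 hi).2
    rw [show x i = 0 by omega]

open ComplexConjugate

theorem overlap_symmPow_dicke (n k : ℕ) (σ : Fin 2 → ℂ) :
    overlap (symmPow n σ) (dicke n k) =
      (Real.sqrt (n.choose k) : ℂ) * conj (σ 0) ^ (n - k) * conj (σ 1) ^ k := by
  have hterm : ∀ x ∈ ({x | ∑ i, (x i : ℕ) = k} : Finset (Fin n → Fin 2)),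
      conj (symmPow n σ x) * ((1 / Real.sqrt (n.choose k) : ℝ) : ℂ) =
        conj (σ 0) ^ (n - k) * conj (σ 1) ^ k * ((1 / Real.sqrt (n.choose k) : ℝ) : ℂ) := by
    intro x hx
    rw [symmPow, map_prod, prod_comp_fin_two (fun j => conj (σ j)), (mem_filter.1 hx).2]
  have hscale : ((n.choose k : ℕ) : ℂ) * ((1 / Real.sqrt (n.choose k) : ℝ) : ℂ) =
      (Real.sqrt (n.choose k) : ℂ) := by
    rw [← Complex.ofReal_natCast, ← Complex.ofReal_mul, mul_one_div, Real.div_sqrt]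
  simp only [overlap, dicke, mul_ite, mul_zero]
  rw [← sum_filter, sum_congr rfl hterm, sum_const, card_filter_sum_val_eq_choose, nsmul_eq_mul,
    ← hscale]
  ring

theorem overlap_add_right {n : ℕ} (f g h : (Fin n → Fin 2) → ℂ) :
    overlap f (g + h) = overlap f g + overlap f h := by
  simp only [overlap, Pi.add_apply, mul_add, sum_add_distrib]

theorem overlap_const_mul_right {n : ℕ} (f g : (Fin n → Fin 2) → ℂ) (c : ℂ) :
    overlap f (fun x => c * g x) = c * overlap f g := by
  simp only [overlap, mul_sum]
  exact sum_congr rfl fun x _ => by ring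

theorem overlap_symmPow_trigonalBipyramidState (σ : Fin 2 → ℂ) :
    overlap (symmPow 5 σ) trigonalBipyramidState =
      ((1 / Real.sqrt 2 : ℝ) : ℂ) *
        (Real.sqrt 5 * conj (σ 0) ^ 4 * conj (σ 1) +
          Real.sqrt 5 * conj (σ 0) * conj (σ 1) ^ 4) := by
  change overlap _ (fun x => _ * (dicke 5 1 + dicke 5 4) x) = _
  rw [overlap_const_mul_right, overlap_add_right, overlap_symmPow_dicke, overlap_symmPow_dicke]
  norm_num

theorem sq_pow_four_mul_add_mul_pow_four_le {a b : ℝ} (ha : 0 ≤ a) (hb : 0 ≤ b)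
    (hab : a ^ 2 + b ^ 2 = 1) : (a ^ 4 * b + a * b ^ 4) ^ 2 ≤ 1 / 8 := by
  have hu : 0 ≤ a * b := mul_nonneg ha hb
  have hu_le : a * b ≤ 1 / 2 := by nlinarith [sq_nonneg (a - b)]
  have hexpand :
      (a ^ 4 * b + a * b ^ 4) ^ 2 = (a * b) ^ 2 * (1 + 2 * (a * b)) * (1 - a * b) ^ 2 := by
    have hcube : a ^ 3 + b ^ 3 = (a + b) * (1 - a * b) := by linear_combination (a + b) * hab
    have hsum : (a + b) ^ 2 = 1 + 2 * (a * b) := by linear_combination hab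
    calc (a ^ 4 * b + a * b ^ 4) ^ 2 = (a * b) ^ 2 * (a ^ 3 + b ^ 3) ^ 2 := by ring
      _ = (a * b) ^ 2 * (a + b) ^ 2 * (1 - a * b) ^ 2 := by rw [hcube]; ring
      _ = _ := by rw [hsum]
  rw [hexpand]
  set u := a * b
  have h12 : 0 ≤ 1 - 2 * u := by linarith
  nlinarith [mul_nonneg (mul_nonneg h12 h12) (by linarith : (0 : ℝ) ≤ 1 + 4 * u),
    mul_nonneg h12 (mul_nonneg (sq_nonneg u) (by nlinarith [sq_nonneg (2 * u - 1)] :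
      (0 : ℝ) ≤ 2 * u ^ 2 - 2 * u + 1))]

theorem norm_overlap_symmPow_trigonalBipyramidState_sq_le (σ : Fin 2 → ℂ)
    (hσ : qubitUnit σ) :
    ‖overlap (symmPow 5 σ) trigonalBipyramidState‖ ^ 2 ≤ 5 / 16 := by
  set a := ‖σ 0‖
  set b := ‖σ 1‖
  have hform : overlap (symmPow 5 σ) trigonalBipyramidState =
      ((Real.sqrt 5 / Real.sqrt 2 : ℝ) : ℂ) *
        (conj (σ 0) ^ 4 * conj (σ 1) + conj (σ 0) * conj (σ 1) ^ 4) := by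
    rw [overlap_symmPow_trigonalBipyramidState]
    push_cast
    ring
  have hcoeff : ‖((Real.sqrt 5 / Real.sqrt 2 : ℝ) : ℂ)‖ ^ 2 = 5 / 2 := by
    rw [Complex.norm_real, Real.norm_eq_abs, sq_abs, div_pow, Real.sq_sqrt (by norm_num),
      Real.sq_sqrt (by norm_num)]
  have htriangle : ‖conj (σ 0) ^ 4 * conj (σ 1) + conj (σ 0) * conj (σ 1) ^ 4‖ ≤
      a ^ 4 * b + a * b ^ 4 := by
    refine (norm_add_le _ _).trans_eq ?_
    simp only [norm_mul, norm_pow, Complex.norm_conj, a, b]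
  calc ‖overlap (symmPow 5 σ) trigonalBipyramidState‖ ^ 2
      = 5 / 2 * ‖conj (σ 0) ^ 4 * conj (σ 1) + conj (σ 0) * conj (σ 1) ^ 4‖ ^ 2 := by
        rw [hform, norm_mul, mul_pow, hcoeff]
    _ ≤ 5 / 2 * (a ^ 4 * b + a * b ^ 4) ^ 2 := by gcongr
    _ ≤ 5 / 2 * (1 / 8) := by
        gcongr
        exact sq_pow_four_mul_add_mul_pow_four_le (norm_nonneg _) (norm_nonneg _) hσ
    _ = 5 / 16 := by norm_num

theorem qubitUnit_bloch (θ ph : ℝ) : qubitUnit (bloch θ ph) := by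
  simp only [qubitUnit, bloch, ↓reduceIte, one_ne_zero, norm_mul, Complex.norm_real,
    Complex.norm_exp_I_mul_ofReal, one_mul, Real.norm_eq_abs, sq_abs, Real.cos_sq_add_sin_sq]

theorem bloch_pi_div_two_zero (i : Fin 2) :
    bloch (Real.pi / 2) 0 i = ((Real.sqrt 2 / 2 : ℝ) : ℂ) := by
  have hangle : Real.pi / 2 / 2 = Real.pi / 4 := by ring
  fin_cases i <;> simp [bloch, hangle]

theorem norm_overlap_symmPow_bloch_trigonalBipyramidState_sq :
    ‖overlap (symmPow 5 (bloch (Real.pi / 2) 0)) trigonalBipyramidState‖ ^ 2 = 5 / 16 := by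
  have h2 : Real.sqrt 2 ^ 2 = 2 := Real.sq_sqrt (by norm_num)
  have h5 : Real.sqrt 5 ^ 2 = 5 := Real.sq_sqrt (by norm_num)
  rw [overlap_symmPow_trigonalBipyramidState, bloch_pi_div_two_zero, bloch_pi_div_two_zero,
    Complex.conj_ofReal]
  norm_cast
  rw [Real.norm_eq_abs, sq_abs]
  field_simp
  ring_nf
  rw [h5, show Real.sqrt 2 ^ 8 = (Real.sqrt 2 ^ 2) ^ 4 by ring, h2]
  norm_num

theorem trigonal_bipyramid_state_geometric_measure :
    (∀ σ : Fin 2 → ℂ, qubitUnit σ →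
      ‖overlap (symmPow 5 σ) trigonalBipyramidState‖ ^ 2 ≤ 5 / 16) ∧
    ‖overlap (symmPow 5 (bloch (Real.pi/2) 0)) trigonalBipyramidState‖ ^ 2 = 5 / 16 ∧
    - Real.logb 2 (sSup {a : ℝ | ∃ σ : Fin 2 → ℂ, qubitUnit σ ∧
        a = ‖overlap (symmPow 5 σ) trigonalBipyramidState‖ ^ 2})
      = Real.logb 2 (16 / 5) := by
  refine ⟨norm_overlap_symmPow_trigonalBipyramidState_sq_le,
    norm_overlap_symmPow_bloch_trigonalBipyramidState_sq, ?_⟩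
  have hgreatest : IsGreatest {a : ℝ | ∃ σ : Fin 2 → ℂ, qubitUnit σ ∧
      a = ‖overlap (symmPow 5 σ) trigonalBipyramidState‖ ^ 2} (5 / 16) :=
    ⟨⟨bloch (Real.pi / 2) 0, qubitUnit_bloch _ _,
        norm_overlap_symmPow_bloch_trigonalBipyramidState_sq.symm⟩,
      fun _ ⟨σ, hσ, ha⟩ => ha ▸ norm_overlap_symmPow_trigonalBipyramidState_sq_le σ hσ⟩
  rw [hgreatest.csSup_eq, ← Real.logb_inv, inv_div]
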